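/- arXiv:0901.2624 — 2 statements merged into one kernel-verified Lean document; each statement's English description precedes it below -/
import Mathlib

section
/- If F is a fan graph consisting of an even number of triangles sharing a common apex vertex v, with endpoint vertices u and w of degree 1 in F minus v, and u, v, w are assigned colors from {1,2,3} such that u and w receive the same color (different from v's color), then this partial 3-coloring extends to a proper 3-coloring of F. -/
/-- The fan graph with apex `0` and path vertices `x_i = i + 1` for `0 ≤ i ≤ n`:
the apex is adjacent to every other vertex, and `x_i ~ x_{i+1}` for `0 ≤ i < n`.
It consists of `n` triangles sharing the common apex. -/
def fanGraph (n : ℕ) : SimpleGraph (Fin (n + 2)) :=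
  SimpleGraph.fromRel (fun a b => a = 0 ∨ (a ≠ 0 ∧ b ≠ 0 ∧ (b : ℕ) = (a : ℕ) + 1))

lemma third_color (cu cv : Fin 3) (h : cu ≠ cv) :
    -(cu + cv) ≠ cu ∧ -(cu + cv) ≠ cv := by
  revert h; fin_cases cu <;> fin_cases cv <;> decide

/-- Lemma 2.1(a): if a fan `F` with an even number of triangles has its apex `v = 0`,
and endpoints `u = x_0` and `w = x_n` colored so that `u` and `w` get the same color
(different from the apex's color), this extends to a proper 3-coloring of `F`. -/
theorem even_fan_extension (n : ℕ) (hn : Even n) (cu cv : Fin 3) (huv : cu ≠ cv) :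
    ∃ c : Fin (n + 2) → Fin 3,
      (∀ ⦃a b⦄, (fanGraph n).Adj a b → c a ≠ c b) ∧
      c 0 = cv ∧ c 1 = cu ∧ c (Fin.last (n + 1)) = cu := by
  obtain ⟨h3u, h3v⟩ := third_color cu cv huv
  set c3 : Fin 3 := -(cu + cv) with hc3
  refine ⟨fun k => if k = 0 then cv else if (k : ℕ) % 2 = 1 then cu else c3, ?_, ?_, ?_, ?_⟩
  · intro a b hab
    rw [fanGraph, SimpleGraph.fromRel_adj] at hab
    obtain ⟨hne, hrel⟩ := hab
    -- helper: apex case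
    have apex : ∀ x : Fin (n+2), x ≠ 0 →
        (if x = 0 then cv else if (x : ℕ) % 2 = 1 then cu else c3) ≠ cv := by
      intro x hx
      simp only [hx, if_neg, if_false]
      split
      · exact huv
      · exact h3v
    have step : ∀ a b : Fin (n+2), a ≠ 0 → b ≠ 0 → (b : ℕ) = (a : ℕ) + 1 →
        (if a = 0 then cv else if (a : ℕ) % 2 = 1 then cu else c3) ≠
        (if b = 0 then cv else if (b : ℕ) % 2 = 1 then cu else c3) := by
      intro a b ha hb hs
      simp only [ha, hb, if_neg, if_false]
      have : (b : ℕ) % 2 ≠ (a : ℕ) % 2 := by omega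
      rcases Nat.mod_two_eq_zero_or_one (a : ℕ) with h | h <;>
        rcases Nat.mod_two_eq_zero_or_one (b : ℕ) with h' | h' <;>
        simp [h, h'] at this ⊢ <;> first | exact h3u.symm | exact h3u
    rcases hrel with (h0 | ⟨ha, hb, hs⟩) | (h0 | ⟨hb, ha, hs⟩)
    · subst h0
      have hb : b ≠ 0 := fun h => hne h.symm
      simp only [if_pos rfl]
      exact (apex b hb).symm
    · exact step a b ha hb hs
    · subst h0
      have ha : a ≠ 0 := hne
      simp only [if_pos rfl]
      exact apex a ha
    · exact (step b a hb ha hs).symm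
  · simp
  · have h1 : ((1 : Fin (n+2)) : ℕ) = 1 := by
      simp [Fin.val_one]
    have h10 : (1 : Fin (n+2)) ≠ 0 := by
      intro h
      have := congrArg Fin.val h
      simp [h1] at this
    simp [h10, h1]
  · have hl : ((Fin.last (n+1)) : ℕ) = n + 1 := rfl
    have hl0 : Fin.last (n+1) ≠ 0 := by
      intro h
      have := congrArg Fin.val h
      simp [hl] at this
    obtain ⟨m, hm⟩ := hn
    have : (n + 1) % 2 = 1 := by omega
    simp [hl0, hl, this]
end

section
/- If F is an odd fan (a fan with an odd number of triangles) with apex v and endpoint vertices u and w, and u, v, w are assigned three pairwise distinct colors from {1,2,3}, then this partial coloring extends to a proper 3-coloring of F. -/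
/-- Lemma 2.1(c): if a fan with an odd number of triangles has its apex `v = 0`,
endpoint `u = x_0` and endpoint `w = x_n` assigned pairwise distinct colors,
then this partial coloring extends to a proper 3-coloring of the fan. -/
theorem odd_fan_extension (n : ℕ) (hn : Odd n) (cu cv cw : Fin 3)
    (huv : cu ≠ cv) (hvw : cv ≠ cw) (huw : cu ≠ cw) :
    ∃ c : Fin (n + 2) → Fin 3,
      (∀ ⦃a b⦄, (fanGraph n).Adj a b → c a ≠ c b) ∧
      c 0 = cv ∧ c 1 = cu ∧ c (Fin.last (n + 1)) = cw := by
  refine ⟨fun k => if (k : ℕ) = 0 then cv else if (k : ℕ) % 2 = 1 then cu else cw, ?_, ?_, ?_, ?_⟩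
  · intro a b hab
    obtain ⟨hne, hrel⟩ := hab
    have hne' : (a : ℕ) ≠ (b : ℕ) := fun h => hne (Fin.ext h)
    have h0 : ((0 : Fin (n + 2)) : ℕ) = 0 := rfl
    simp only
    rcases hrel with (h | ⟨ha, hb, hcons⟩) | (h | ⟨hb, ha, hcons⟩)
    · subst h
      have hb0 : (b : ℕ) ≠ 0 := fun h => hne (Fin.ext (h0.trans h.symm))
      rw [if_pos h0, if_neg hb0]
      split <;> [exact fun h => huv h.symm; exact hvw]
    · have ha0 : (a : ℕ) ≠ 0 := fun h => ha (Fin.ext h)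
      have hb0 : (b : ℕ) ≠ 0 := fun h => hb (Fin.ext h)
      have : (a : ℕ) % 2 ≠ (b : ℕ) % 2 := by omega
      simp only [if_neg ha0, if_neg hb0]
      split <;> split <;> first | omega | exact huw | exact fun h => huw h.symm
    · subst h
      have hb0 : (a : ℕ) ≠ 0 := fun h => hne (Fin.ext (h.trans h0.symm))
      rw [if_neg hb0, if_pos h0]
      split <;> [exact huv; exact fun h => hvw h.symm]
    · have ha0 : (a : ℕ) ≠ 0 := fun h => ha (Fin.ext h)
      have hb0 : (b : ℕ) ≠ 0 := fun h => hb (Fin.ext h)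
      have : (a : ℕ) % 2 ≠ (b : ℕ) % 2 := by omega
      simp only [if_neg ha0, if_neg hb0]
      split <;> split <;> first | omega | exact huw | exact fun h => huw h.symm
  · simp
  · have h1 : ((1 : Fin (n + 2)) : ℕ) = 1 := by
      simp [Fin.val_one]
    simp [h1]
  · have hl : ((Fin.last (n + 1)) : ℕ) = n + 1 := rfl
    obtain ⟨k, hk⟩ := hn
    have h2 : (n + 1) % 2 = 0 := by omega
    simp [hl, h2]
end
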